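/- arXiv:cs/0511087 — 2 statements merged into one kernel-verified Lean document; each statement's English description precedes it below -/
import Mathlib

section
/- For fixed positive reals n and s, the function h(u) = u·[ψ(n+s+1) − ψ((n+s)u+1)] is strictly concave on (0,1], i.e., h''(u) < 0 for u ∈ (0,1]. -/
/-- The trigamma function `ψ'(z) = Σ_{k≥0} 1/(z+k)²`. -/
noncomputable def trigamma (z : ℝ) : ℝ := ∑' k : ℕ, 1 / (z + k) ^ 2

/-- The second derivative of the digamma function,
`ψ''(z) = −2 Σ_{k≥0} 1/(z+k)³`. -/
noncomputable def psiSecond (z : ℝ) : ℝ := -2 * ∑' k : ℕ, 1 / (z + k) ^ 3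

lemma summable_aux (z : ℝ) (hz : 1 ≤ z) (p : ℕ) (hp : 2 ≤ p) :
    Summable (fun k : ℕ => 1 / (z + k) ^ p) := by
  have hbase : Summable (fun k : ℕ => 1 / ((k : ℝ) + 1) ^ 2) := by
    have := (Real.summable_one_div_nat_pow (p := 2)).mpr one_lt_two
    have h2 := (summable_nat_add_iff 1).mpr this
    simpa using h2
  apply hbase.of_nonneg_of_le
  · intro k
    positivity
  · intro k
    have hk : (k : ℝ) + 1 ≤ z + k := by linarith
    have hk0 : (0:ℝ) < (k : ℝ) + 1 := by positivity
    have h2 : ((k : ℝ) + 1) ^ 2 ≤ (z + k) ^ 2 := by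
      apply pow_le_pow_left₀ (by positivity) hk
    have h3 : (z + k) ^ 2 ≤ (z + k) ^ p := by
      apply pow_le_pow_right₀ (by linarith) hp
    apply one_div_le_one_div_of_le
    · positivity
    · linarith

/-- For fixed reals `n ≥ 0` and `s > 0`, the function
`h(u) = u·[ψ(n+s+1) − ψ((n+s)u+1)]` is strictly concave on `(0,1]`, i.e. its second
derivative `h''(u) = −2(n+s)ψ'((n+s)u+1) − u(n+s)²ψ''((n+s)u+1)` is negative there. -/
theorem h_second_deriv_neg (n s : ℝ) (hn : 0 ≤ n) (hs : 0 < s)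
    (u : ℝ) (hu : u ∈ Set.Ioc (0 : ℝ) 1) :
    -2 * (n + s) * trigamma ((n + s) * u + 1)
      - u * (n + s) ^ 2 * psiSecond ((n + s) * u + 1) < 0 := by
  obtain ⟨hu0, hu1⟩ := hu
  set a := n + s with ha
  have ha0 : 0 < a := by positivity
  set z := a * u + 1 with hz
  have hz1 : 1 ≤ z := by nlinarith
  have hz0 : 0 < z := by linarith
  have hT : Summable (fun k : ℕ => 1 / (z + k) ^ 2) := summable_aux z hz1 2 le_rfl
  have hS : Summable (fun k : ℕ => 1 / (z + k) ^ 3) := summable_aux z hz1 3 (by norm_num)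
  -- key: u * a * S < T
  have key : u * a * (∑' k : ℕ, 1 / (z + k) ^ 3) < ∑' k : ℕ, 1 / (z + k) ^ 2 := by
    rw [← tsum_mul_left]
    apply Summable.tsum_lt_tsum (i := 0) _ _ ((hS.mul_left _)) hT
    · intro k
      have hzk : 0 < z + k := by positivity
      have h1 : u * a < z + k := by
        have : (0:ℝ) ≤ k := Nat.cast_nonneg k
        nlinarith
      show u * a * (1 / (z + k) ^ 3) ≤ 1 / (z + k) ^ 2
      rw [mul_one_div, div_le_div_iff₀ (by positivity) (by positivity)]
      nlinarith [pow_pos hzk 2]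
    · have hzk : 0 < z + (0:ℕ) := by positivity
      have h1 : u * a < z + (0:ℕ) := by push_cast; nlinarith
      show u * a * (1 / (z + (0:ℕ)) ^ 3) < 1 / (z + (0:ℕ)) ^ 2
      rw [mul_one_div, div_lt_div_iff₀ (by positivity) (by positivity)]
      nlinarith [pow_pos hzk 2]
  have hTr : trigamma z = ∑' k : ℕ, 1 / (z + k) ^ 2 := rfl
  have hPs : psiSecond z = -2 * ∑' k : ℕ, 1 / (z + k) ^ 3 := rfl
  rw [hTr, hPs]
  nlinarith
end

section
/- For a Dirichlet-distributed random probability vector π with parameters n_i + s t_i (total n + s), the expected value of π_i is u_i = (n_i + s t_i)/(n + s), and the expected entropy E[H(π)] equals Σ_i h(u_i) with h(u) = u[ψ(n+s+1) − ψ((n+s)u+1)]. -/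
/-!
The Dirichlet integral `∫_S ∏ πᵢ ^ (βᵢ - 1) = ∏ Γ(βᵢ) / Γ(∑ βᵢ)` follows by induction on `d`:
integrating out the last free coordinate leaves a scaled Beta integral, which merges the last
two parameters. Multiplying the density by `π_j ^ x` shifts `β_j` by `x`, so
`E[π_j ^ x] = Γ(∑ β) Γ(β_j + x) / (Γ(β_j) Γ(∑ β + x))`. At `x = 1` this is the mean `β_j / ∑ β`;
differentiating at `x = 1` under the integral sign gives
`E[π_j log π_j] = (β_j / ∑ β) (ψ(β_j + 1) - ψ(∑ β + 1))`, and summing over `j` gives the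
expected entropy. With `βᵢ = nᵢ + s tᵢ` one has `∑ β = n + s`.
-/

open MeasureTheory
open scoped BigOperators

/-- The digamma function, the logarithmic derivative of the Gamma function. -/
noncomputable def digamma (x : ℝ) : ℝ := deriv (fun y => Real.log (Real.Gamma y)) x

section

open Real Set ProbabilityTheory Topology
open scoped ENNReal

theorem hasDerivAt_Gamma_mul_digamma {x : ℝ} (hx : 0 < x) :
    HasDerivAt Gamma (Gamma x * digamma x) x := by
  have hΓ : DifferentiableAt ℝ Gamma x :=
    differentiableAt_Gamma fun m hm => by linarith [hm ▸ hx, (m.cast_nonneg : (0 : ℝ) ≤ m)]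
  have hne := (Gamma_pos_of_pos hx).ne'
  rw [digamma, deriv.log hΓ hne, mul_div_cancel₀ _ hne]
  exact hΓ.hasDerivAt

theorem hasDerivAt_Gamma_add_div_Gamma_add {a b x : ℝ} (ha : 0 < a + x) (hb : 0 < b + x) :
    HasDerivAt (fun y => Gamma (a + y) / Gamma (b + y))
      (Gamma (a + x) / Gamma (b + x) * (digamma (a + x) - digamma (b + x))) x := by
  have hGa := (hasDerivAt_Gamma_mul_digamma ha).comp_const_add a x
  have hGb := (hasDerivAt_Gamma_mul_digamma hb).comp_const_add b x
  have hne := (Gamma_pos_of_pos hb).ne'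
  exact (hGa.div hGb hne).congr_deriv (by field_simp)

theorem abs_log_mul_rpow_le {b : ℝ} (hb : 0 < b) (hb1 : b ≤ 1) (x : ℝ) {ε : ℝ} (hε : 0 < ε) :
    |log b| * b ^ x ≤ b ^ (x - ε) / ε := by
  have hlog : |log b| ≤ b ^ (-ε) / ε := by
    rw [abs_of_nonpos (log_nonpos hb.le hb1), ← log_inv, rpow_neg hb.le, ← inv_rpow hb.le]
    exact log_le_rpow_div (inv_nonneg.2 hb.le) hε
  calc |log b| * b ^ x ≤ b ^ (-ε) / ε * b ^ x := by gcongr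
    _ = b ^ (x - ε) / ε := by rw [div_mul_eq_mul_div, ← rpow_add hb, neg_add_eq_sub]

theorem hasDerivAt_integral_rpow_mul {α : Type*} [MeasurableSpace α] {μ : Measure α}
    {f g : α → ℝ} (hf : Measurable f) (hg : AEStronglyMeasurable g μ)
    (hf_pos : ∀ᵐ a ∂μ, 0 < f a) (hf_le : ∀ᵐ a ∂μ, f a ≤ 1) {x₀ δ : ℝ} (hδ : 0 < δ)
    (hint : Integrable (fun a => f a ^ (x₀ - δ) * g a) μ) :
    Integrable (fun a => log (f a) * f a ^ x₀ * g a) μ ∧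
      HasDerivAt (fun x => ∫ a, f a ^ x * g a ∂μ) (∫ a, log (f a) * f a ^ x₀ * g a ∂μ) x₀ := by
  have hmeas : ∀ x : ℝ, AEStronglyMeasurable (fun a => f a ^ x * g a) μ := fun x =>
    (hf.pow_const x).aestronglyMeasurable.mul hg
  refine hasDerivAt_integral_of_dominated_loc_of_deriv_le (F := fun x a => f a ^ x * g a)
    (F' := fun x a => log (f a) * f a ^ x * g a)
    (bound := fun a => 2 / δ * ‖f a ^ (x₀ - δ) * g a‖) (Metric.ball_mem_nhds x₀ (half_pos hδ))
    (.of_forall hmeas) ?_ (((measurable_log.comp hf).aestronglyMeasurable.mul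
      (hf.pow_const x₀).aestronglyMeasurable).mul hg) ?_ (hint.norm.const_mul _) ?_
  · refine hint.mono (hmeas x₀) ?_
    filter_upwards [hf_pos, hf_le] with a ha0 ha1
    rw [norm_mul, norm_mul, Real.norm_of_nonneg (rpow_nonneg ha0.le _),
      Real.norm_of_nonneg (rpow_nonneg ha0.le _)]
    exact mul_le_mul_of_nonneg_right (rpow_le_rpow_of_exponent_ge ha0 ha1 (by linarith))
      (norm_nonneg _)
  · filter_upwards [hf_pos, hf_le] with a ha0 ha1 x hx
    have hx' : x₀ - δ ≤ x - δ / 2 := by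
      have := (abs_sub_lt_iff.1 (mem_ball_iff_norm.1 hx)); linarith
    rw [norm_mul, norm_mul, norm_mul, Real.norm_eq_abs, Real.norm_of_nonneg (rpow_nonneg ha0.le _),
      Real.norm_of_nonneg (rpow_nonneg ha0.le _), ← mul_assoc (2 / δ)]
    refine mul_le_mul_of_nonneg_right ?_ (norm_nonneg _)
    calc |log (f a)| * f a ^ x ≤ f a ^ (x - δ / 2) / (δ / 2) :=
          abs_log_mul_rpow_le ha0 ha1 x (half_pos hδ)
      _ ≤ f a ^ (x₀ - δ) / (δ / 2) :=
          div_le_div_of_nonneg_right (rpow_le_rpow_of_exponent_ge ha0 ha1 hx') (by positivity)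
      _ = 2 / δ * f a ^ (x₀ - δ) := by ring
  · filter_upwards [hf_pos] with a ha0 x _
    simpa [mul_comm (log (f a))] using
      ((hasStrictDerivAt_const_rpow ha0 x).hasDerivAt.mul_const (g a))

theorem Real.lintegral_comp_mul_left (f : ℝ → ℝ≥0∞) {c : ℝ} (hc : c ≠ 0) :
    ∫⁻ x, f x = ENNReal.ofReal |c| * ∫⁻ u, f (c * u) := by
  conv_lhs => rw [← Real.smul_map_volume_mul_left hc]
  rw [lintegral_smul_measure]
  exact congrArg _ (lintegral_map_equiv f (MeasurableEquiv.mulLeft₀ c hc))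

theorem lintegral_Ioo_rpow_mul_one_sub_rpow {p q : ℝ} (hp : 0 < p) (hq : 0 < q) :
    ∫⁻ x in Ioo 0 1, ENNReal.ofReal (x ^ (p - 1) * (1 - x) ^ (q - 1)) =
      ENNReal.ofReal (beta p q) := by
  have hB := beta_pos hp hq
  rw [← mul_one (ENNReal.ofReal (beta p q)), ← lintegral_betaPDF_eq_one hp hq, lintegral_betaPDF,
    ← lintegral_const_mul' _ _ ENNReal.ofReal_ne_top]
  refine setLIntegral_congr_fun measurableSet_Ioo fun x _ => ?_
  rw [← ENNReal.ofReal_mul hB.le]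
  congr 1
  field_simp

theorem lintegral_Ioo_rpow_mul_sub_rpow {p q c : ℝ} (hp : 0 < p) (hq : 0 < q) (hc : 0 < c) :
    ∫⁻ x in Ioo 0 c, ENNReal.ofReal (x ^ (p - 1) * (c - x) ^ (q - 1)) =
      ENNReal.ofReal (c ^ (p + q - 1) * beta p q) := by
  have hscale : ∀ u, (Ioo 0 c).indicator (fun x => ENNReal.ofReal (x ^ (p - 1) * (c - x) ^ (q - 1)))
      (c * u) = ENNReal.ofReal (c ^ (p + q - 2)) *
        (Ioo 0 1).indicator (fun u => ENNReal.ofReal (u ^ (p - 1) * (1 - u) ^ (q - 1))) u := by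
    intro u
    have hmem : c * u ∈ Ioo 0 c ↔ u ∈ Ioo 0 1 := by
      simp only [mem_Ioo, mul_pos_iff_of_pos_left hc, mul_lt_iff_lt_one_right hc]
    by_cases hu : u ∈ Ioo 0 1
    · rw [indicator_of_mem (hmem.2 hu), indicator_of_mem hu, ← ENNReal.ofReal_mul (by positivity)]
      congr 1
      rw [← mul_one_sub, mul_rpow hc.le hu.1.le, mul_rpow hc.le (sub_nonneg.2 hu.2.le),
        show p + q - 2 = (p - 1) + (q - 1) by ring, rpow_add hc]
      ring
    · rw [indicator_of_notMem (mt hmem.1 hu), indicator_of_notMem hu, mul_zero]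
  rw [← lintegral_indicator measurableSet_Ioo, lintegral_comp_mul_left _ hc.ne',
    lintegral_congr hscale, lintegral_const_mul' _ _ ENNReal.ofReal_ne_top,
    lintegral_indicator measurableSet_Ioo, lintegral_Ioo_rpow_mul_one_sub_rpow hp hq,
    ← ENNReal.ofReal_mul (by positivity), ← ENNReal.ofReal_mul (abs_nonneg c), abs_of_pos hc,
    ← mul_assoc, show p + q - 1 = 1 + (p + q - 2) by ring, rpow_add hc, rpow_one]

theorem lintegral_fin_snoc {d : ℕ} (f : (Fin (d + 1) → ℝ) → ℝ≥0∞) (hf : Measurable f) :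
    ∫⁻ y, f y = ∫⁻ y, ∫⁻ x, f (Fin.snoc y x) := by
  let e := MeasurableEquiv.piFinSuccAbove (fun _ : Fin (d + 1) => ℝ) (Fin.last d)
  rw [(volume_preserving_piFinSuccAbove _ (Fin.last d)).symm.lintegral_map_equiv,
    Measure.volume_eq_prod,
    lintegral_prod_symm' (fun z => f (e.symm z)) (hf.comp e.symm.measurable)]
  simp only [e, MeasurableEquiv.piFinSuccAbove_symm_apply, Fin.insertNthEquiv_last]
  rfl

namespace Dirichlet

noncomputable def simplexPoint {d : ℕ} (y : Fin d → ℝ) : Fin (d + 1) → ℝ :=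
  Fin.snoc y (1 - ∑ i, y i)

def simplexChart (d : ℕ) : Set (Fin d → ℝ) := {y | (∀ i, 0 < y i) ∧ ∑ i, y i < 1}

noncomputable def density {d : ℕ} (β : Fin (d + 1) → ℝ) (y : Fin d → ℝ) : ℝ :=
  ∏ i, simplexPoint y i ^ (β i - 1)

noncomputable def multiBeta {ι : Type*} [Fintype ι] (β : ι → ℝ) : ℝ :=
  (∏ i, Gamma (β i)) / Gamma (∑ i, β i)

theorem multiBeta_pos {ι : Type*} [Fintype ι] [Nonempty ι] {β : ι → ℝ} (hβ : ∀ i, 0 < β i) :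
    0 < multiBeta β :=
  div_pos (Finset.prod_pos fun i _ => Gamma_pos_of_pos (hβ i))
    (Gamma_pos_of_pos (Finset.sum_pos (fun i _ => hβ i) Finset.univ_nonempty))

theorem multiBeta_update_add {ι : Type*} [Fintype ι] [DecidableEq ι] {β : ι → ℝ}
    (hβ : ∀ i, 0 < β i) (j : ι) (x : ℝ) :
    multiBeta (Function.update β j (β j + x)) =
      multiBeta β * (Gamma (∑ i, β i) / Gamma (β j)) *
        (Gamma (β j + x) / Gamma (∑ i, β i + x)) := by
  have hj := (Gamma_pos_of_pos (hβ j)).ne'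
  have hsum := (Gamma_pos_of_pos (Finset.sum_pos (fun i _ => hβ i) ⟨j, Finset.mem_univ j⟩)).ne'
  have hprod : ∏ i, Gamma (Function.update β j (β j + x) i) =
      Gamma (β j + x) * ∏ i ∈ Finset.univ \ {j}, Gamma (β i) := by
    simp only [Function.apply_update (fun _ => Gamma)]
    exact Finset.prod_update_of_mem (Finset.mem_univ j) _ _
  rw [multiBeta, multiBeta, hprod, Finset.sum_update_of_mem (Finset.mem_univ j),
    Finset.prod_eq_mul_prod_sdiff_singleton_of_mem (Finset.mem_univ j),
    Finset.sum_eq_add_sum_sdiff_singleton_of_mem (Finset.mem_univ j)]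
  rw [Finset.sum_eq_add_sum_sdiff_singleton_of_mem (Finset.mem_univ j)] at hsum
  field_simp
  rw [add_right_comm (β j) x]

variable {d : ℕ}

theorem multiBeta_snoc_snoc (γ : Fin d → ℝ) {p q : ℝ} (hp : 0 < p) (hq : 0 < q) :
    multiBeta (Fin.snoc (Fin.snoc γ p) q : Fin (d + 2) → ℝ) =
      beta p q * multiBeta (Fin.snoc γ (p + q)) := by
  have := (Gamma_pos_of_pos (add_pos hp hq)).ne'
  simp only [multiBeta, beta, Fin.prod_univ_castSucc, Fin.sum_univ_castSucc, Fin.snoc_castSucc,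
    Fin.snoc_last, add_assoc]
  field_simp

theorem measurableSet_simplexChart (d : ℕ) : MeasurableSet (simplexChart d) := by
  have hpos : MeasurableSet {y : Fin d → ℝ | ∀ i, 0 < y i} := by
    simp only [ofPred_forall]
    exact MeasurableSet.iInter fun i => measurableSet_lt measurable_const (measurable_pi_apply i)
  exact hpos.inter (measurableSet_lt (Finset.measurable_sum _ fun i _ => measurable_pi_apply i)
    measurable_const)

theorem measurable_simplexPoint (i : Fin (d + 1)) :
    Measurable fun y : Fin d → ℝ => simplexPoint y i := by
  induction i using Fin.lastCases with
  | last =>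
    simp only [simplexPoint, Fin.snoc_last]
    exact measurable_const.sub (Finset.measurable_sum _ fun i _ => measurable_pi_apply i)
  | cast j => simpa [simplexPoint] using measurable_pi_apply j

theorem measurable_density (β : Fin (d + 1) → ℝ) : Measurable (density β) :=
  Finset.measurable_prod _ fun i _ => (measurable_simplexPoint i).pow_const _

theorem simplexPoint_pos {y : Fin d → ℝ} (hy : y ∈ simplexChart d) (i : Fin (d + 1)) :
    0 < simplexPoint y i := by
  induction i using Fin.lastCases with
  | last => simpa [simplexPoint] using hy.2
  | cast j => simpa [simplexPoint] using hy.1 j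

theorem simplexPoint_le_one {y : Fin d → ℝ} (hy : y ∈ simplexChart d) (i : Fin (d + 1)) :
    simplexPoint y i ≤ 1 := by
  have hsum : 0 ≤ ∑ k, y k := Finset.sum_nonneg fun k _ => (hy.1 k).le
  induction i using Fin.lastCases with
  | last => simpa [simplexPoint] using hsum
  | cast j =>
    have := Finset.single_le_sum (fun k _ => (hy.1 k).le) (Finset.mem_univ j)
    simp only [simplexPoint, Fin.snoc_castSucc]
    linarith [hy.2]

theorem density_nonneg (β : Fin (d + 1) → ℝ) {y : Fin d → ℝ} (hy : y ∈ simplexChart d) :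
    0 ≤ density β y :=
  Finset.prod_nonneg fun i _ => rpow_nonneg (simplexPoint_pos hy i).le _

theorem snoc_mem_simplexChart_iff {y : Fin d → ℝ} {x : ℝ} :
    Fin.snoc y x ∈ simplexChart (d + 1) ↔ y ∈ simplexChart d ∧ x ∈ Ioo 0 (1 - ∑ k, y k) := by
  simp only [simplexChart, mem_ofPred_eq, mem_Ioo, Fin.sum_univ_castSucc, Fin.snoc_castSucc,
    Fin.snoc_last, Fin.forall_fin_succ', lt_sub_iff_add_lt']
  constructor
  · rintro ⟨⟨hy, hx⟩, hsum⟩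
    exact ⟨⟨hy, by linarith⟩, hx, hsum⟩
  · rintro ⟨⟨hy, -⟩, hx, hsum⟩
    exact ⟨⟨hy, hx⟩, hsum⟩

theorem density_snoc (γ : Fin d → ℝ) (r : ℝ) (y : Fin d → ℝ) :
    density (Fin.snoc γ r) y = (∏ k, y k ^ (γ k - 1)) * (1 - ∑ k, y k) ^ (r - 1) := by
  simp [density, simplexPoint, Fin.prod_univ_castSucc]

theorem density_snoc_snoc (γ : Fin d → ℝ) (p q : ℝ) (y : Fin d → ℝ) (x : ℝ) :
    density (Fin.snoc (Fin.snoc γ p) q) (Fin.snoc y x) =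
      (∏ k, y k ^ (γ k - 1)) * (x ^ (p - 1) * (1 - ∑ k, y k - x) ^ (q - 1)) := by
  rw [density_snoc, Fin.prod_univ_castSucc]
  simp only [Fin.snoc_castSucc, Fin.snoc_last, Fin.sum_univ_castSucc]
  rw [sub_add_eq_sub_sub, mul_assoc]

theorem lintegral_density_snoc_snoc (γ : Fin d → ℝ) {p q : ℝ} (hp : 0 < p) (hq : 0 < q) :
    ∫⁻ y in simplexChart (d + 1), ENNReal.ofReal (density (Fin.snoc (Fin.snoc γ p) q) y) =
      ENNReal.ofReal (beta p q) *
        ∫⁻ y in simplexChart d, ENNReal.ofReal (density (Fin.snoc γ (p + q)) y) := by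
  rw [← lintegral_indicator (measurableSet_simplexChart _), lintegral_fin_snoc _
      ((measurable_density _).ennreal_ofReal.indicator (measurableSet_simplexChart _)),
    ← lintegral_const_mul' _ _ ENNReal.ofReal_ne_top,
    ← lintegral_indicator (measurableSet_simplexChart _)]
  refine lintegral_congr fun y => ?_
  by_cases hy : y ∈ simplexChart d
  · have hc : 0 < 1 - ∑ k, y k := sub_pos.2 hy.2
    have hC : 0 ≤ ∏ k, y k ^ (γ k - 1) := Finset.prod_nonneg fun k _ => rpow_nonneg (hy.1 k).le _
    have hfiber : ∀ x, (simplexChart (d + 1)).indicator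
        (fun y => ENNReal.ofReal (density (Fin.snoc (Fin.snoc γ p) q) y)) (Fin.snoc y x) =
        (Ioo 0 (1 - ∑ k, y k)).indicator (fun x => ENNReal.ofReal (∏ k, y k ^ (γ k - 1)) *
          ENNReal.ofReal (x ^ (p - 1) * (1 - ∑ k, y k - x) ^ (q - 1))) x := by
      intro x
      by_cases hx : x ∈ Ioo 0 (1 - ∑ k, y k)
      · rw [indicator_of_mem (snoc_mem_simplexChart_iff.2 ⟨hy, hx⟩), indicator_of_mem hx,
          density_snoc_snoc, ENNReal.ofReal_mul hC]
      · rw [indicator_of_notMem (fun h => hx (snoc_mem_simplexChart_iff.1 h).2),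
          indicator_of_notMem hx]
    rw [indicator_of_mem hy, lintegral_congr hfiber, lintegral_indicator measurableSet_Ioo,
      lintegral_const_mul' _ _ ENNReal.ofReal_ne_top, lintegral_Ioo_rpow_mul_sub_rpow hp hq hc,
      density_snoc, ← ENNReal.ofReal_mul hC, ← ENNReal.ofReal_mul (beta_pos hp hq).le]
    congr 1
    ring
  · rw [indicator_of_notMem hy]
    simp [snoc_mem_simplexChart_iff, hy]

theorem lintegral_density : ∀ {d : ℕ} {β : Fin (d + 1) → ℝ}, (∀ i, 0 < β i) →
    ∫⁻ y in simplexChart d, ENNReal.ofReal (density β y) = ENNReal.ofReal (multiBeta β)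
  | 0, β, hβ => by
    have hchart : simplexChart 0 = univ := by ext y; simp [simplexChart]
    have hΓ := (Gamma_pos_of_pos (hβ 0)).ne'
    have hpoint : ∀ y : Fin 0 → ℝ, simplexPoint y 0 = 1 := fun y => by
      simpa [simplexPoint] using Fin.snoc_last (α := fun _ => ℝ) (p := y) (x := 1)
    simp [hchart, density, hpoint, multiBeta, hΓ, volume_pi]
  | d + 1, β, hβ => by
    obtain ⟨γ, p, q, rfl⟩ : ∃ γ p q, β = Fin.snoc (Fin.snoc γ p) q :=
      ⟨_, _, _, by rw [Fin.snoc_init_self, Fin.snoc_init_self]⟩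
    simp only [Fin.forall_fin_succ', Fin.snoc_castSucc, Fin.snoc_last] at hβ
    obtain ⟨⟨hγ, hp⟩, hq⟩ := hβ
    have hmerged : ∀ i, 0 < (Fin.snoc γ (p + q) : Fin (d + 1) → ℝ) i :=
      Fin.forall_fin_succ'.2 ⟨by simpa using hγ, by simpa using add_pos hp hq⟩
    rw [lintegral_density_snoc_snoc γ hp hq, lintegral_density hmerged,
      ← ENNReal.ofReal_mul (beta_pos hp hq).le, multiBeta_snoc_snoc γ hp hq]

theorem integrableOn_density {β : Fin (d + 1) → ℝ} (hβ : ∀ i, 0 < β i) :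
    IntegrableOn (density β) (simplexChart d) := by
  refine ⟨(measurable_density β).aestronglyMeasurable, ?_⟩
  rw [hasFiniteIntegral_iff_ofReal (ae_restrict_of_forall_mem (measurableSet_simplexChart d)
    fun y hy => density_nonneg β hy), lintegral_density hβ]
  exact ENNReal.ofReal_lt_top

theorem integral_density {β : Fin (d + 1) → ℝ} (hβ : ∀ i, 0 < β i) :
    ∫ y in simplexChart d, density β y = multiBeta β := by
  rw [integral_eq_lintegral_of_nonneg_ae (ae_restrict_of_forall_mem
    (measurableSet_simplexChart d) fun y hy => density_nonneg β hy)
    (measurable_density β).aestronglyMeasurable, lintegral_density hβ,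
    ENNReal.toReal_ofReal (multiBeta_pos hβ).le]

theorem rpow_mul_density (β : Fin (d + 1) → ℝ) (j : Fin (d + 1)) (x : ℝ) {y : Fin d → ℝ}
    (hy : y ∈ simplexChart d) :
    simplexPoint y j ^ x * density β y = density (Function.update β j (β j + x)) y := by
  simp only [density]
  rw [← Finset.mul_prod_erase _ _ (Finset.mem_univ j), ← Finset.mul_prod_erase _ _
    (Finset.mem_univ j), Function.update_self, ← mul_assoc, ← rpow_add (simplexPoint_pos hy j)]
  congr 1
  · congr 1; ring
  · exact Finset.prod_congr rfl fun i hi => by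
      rw [Function.update_of_ne (Finset.ne_of_mem_erase hi)]

theorem integral_rpow_mul_density {β : Fin (d + 1) → ℝ} (hβ : ∀ i, 0 < β i) (j : Fin (d + 1))
    {x : ℝ} (hx : 0 < β j + x) :
    ∫ y in simplexChart d, simplexPoint y j ^ x * density β y =
      multiBeta β * (Gamma (∑ i, β i) / Gamma (β j)) *
        (Gamma (β j + x) / Gamma (∑ i, β i + x)) := by
  have hupdate : ∀ i, 0 < Function.update β j (β j + x) i := fun i => by
    rcases eq_or_ne i j with rfl | hi
    · simpa using hx
    · simpa [hi] using hβ i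
  rw [setIntegral_congr_fun (measurableSet_simplexChart d) fun y hy => rpow_mul_density β j x hy,
    integral_density hupdate, multiBeta_update_add hβ]

theorem integral_mul_density {β : Fin (d + 1) → ℝ} (hβ : ∀ i, 0 < β i) (j : Fin (d + 1)) :
    ∫ y in simplexChart d, simplexPoint y j * density β y = multiBeta β * (β j / ∑ i, β i) := by
  have hA : 0 < ∑ i, β i := Finset.sum_pos (fun i _ => hβ i) Finset.univ_nonempty
  have h := integral_rpow_mul_density hβ j (x := 1) (by linarith [hβ j])
  simp only [rpow_one] at h
  rw [h, Gamma_add_one (hβ j).ne', Gamma_add_one hA.ne']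
  have := (Gamma_pos_of_pos (hβ j)).ne'
  have := (Gamma_pos_of_pos hA).ne'
  field_simp

theorem integral_mul_log_mul_density {β : Fin (d + 1) → ℝ} (hβ : ∀ i, 0 < β i)
    (j : Fin (d + 1)) :
    IntegrableOn (fun y => simplexPoint y j * log (simplexPoint y j) * density β y)
        (simplexChart d) ∧
      ∫ y in simplexChart d, simplexPoint y j * log (simplexPoint y j) * density β y =
        multiBeta β * (β j / ∑ i, β i) * (digamma (β j + 1) - digamma (∑ i, β i + 1)) := by
  have hA : 0 < ∑ i, β i := Finset.sum_pos (fun i _ => hβ i) Finset.univ_nonempty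
  obtain ⟨hint, hderiv⟩ := hasDerivAt_integral_rpow_mul (μ := volume.restrict (simplexChart d))
    (measurable_simplexPoint j) (measurable_density β).aestronglyMeasurable
    (ae_restrict_of_forall_mem (measurableSet_simplexChart d) fun y hy => simplexPoint_pos hy j)
    (ae_restrict_of_forall_mem (measurableSet_simplexChart d) fun y hy => simplexPoint_le_one hy j)
    one_pos (x₀ := 1) (by simp only [sub_self, rpow_zero, one_mul]; exact integrableOn_density hβ)
  have hclosed : (fun x => ∫ y in simplexChart d, simplexPoint y j ^ x * density β y) =ᶠ[𝓝 1]
      fun x => multiBeta β * (Gamma (∑ i, β i) / Gamma (β j)) *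
        (Gamma (β j + x) / Gamma (∑ i, β i + x)) := by
    filter_upwards [eventually_gt_nhds (show -β j < 1 by linarith [hβ j])] with x hx
    exact integral_rpow_mul_density hβ j (by linarith)
  have hK := (hasDerivAt_Gamma_add_div_Gamma_add (a := β j) (b := ∑ i, β i) (x := 1)
    (by linarith [hβ j]) (by linarith)).const_mul (multiBeta β * (Gamma (∑ i, β i) / Gamma (β j)))
  have h := hderiv.unique (hK.congr_of_eventuallyEq hclosed)
  have hcomm : (fun y => simplexPoint y j * log (simplexPoint y j) * density β y) =
      fun y => log (simplexPoint y j) * simplexPoint y j ^ (1 : ℝ) * density β y := by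
    simp only [rpow_one, mul_comm (log _)]
  refine hcomm ▸ ⟨hint, ?_⟩
  rw [h, Gamma_add_one (hβ j).ne', Gamma_add_one hA.ne']
  have := (Gamma_pos_of_pos (hβ j)).ne'
  have := (Gamma_pos_of_pos hA).ne'
  field_simp

theorem mean_eq {β : Fin (d + 1) → ℝ} (hβ : ∀ i, 0 < β i) (j : Fin (d + 1)) :
    (∫ y in simplexChart d, simplexPoint y j * density β y) /
        (∫ y in simplexChart d, density β y) = β j / ∑ i, β i := by
  rw [integral_mul_density hβ j, integral_density hβ,
    mul_div_cancel_left₀ _ (multiBeta_pos hβ).ne']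

theorem expectedEntropy_eq {β : Fin (d + 1) → ℝ} (hβ : ∀ i, 0 < β i) :
    (∫ y in simplexChart d, (-∑ i, simplexPoint y i * log (simplexPoint y i)) * density β y) /
        (∫ y in simplexChart d, density β y) =
      ∑ i, β i / (∑ k, β k) * (digamma (∑ k, β k + 1) - digamma (β i + 1)) := by
  simp only [neg_mul, Finset.sum_mul]
  rw [integral_neg, integral_finsetSum _ fun i _ => (integral_mul_log_mul_density hβ i).1,
    integral_density hβ, ← Finset.sum_neg_distrib, Finset.sum_div]
  refine Finset.sum_congr rfl fun i _ => ?_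
  rw [(integral_mul_log_mul_density hβ i).2]
  have := (multiBeta_pos hβ).ne'
  field_simp
  ring

end Dirichlet

end

theorem dirichlet_mean_and_expected_entropy_general {d : ℕ}
    (nv : Fin (d + 1) → ℝ) (s : ℝ) (t : Fin (d + 1) → ℝ)
    (ht : t ∈ stdSimplex ℝ (Fin (d + 1)))
    (hpos : ∀ i, 0 < nv i + s * t i) (n : ℝ) (hn : n = ∑ i, nv i) :
    let α : Fin (d + 1) → ℝ := fun i => nv i + s * t i
    let π : (Fin d → ℝ) → Fin (d + 1) → ℝ :=
      fun y => Fin.snoc y (1 - ∑ i, y i)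
    let S : Set (Fin d → ℝ) := {y | (∀ i, 0 < y i) ∧ ∑ i, y i < 1}
    let dens : (Fin d → ℝ) → ℝ := fun y => ∏ i, (π y i) ^ (α i - 1)
    let Z : ℝ := ∫ y in S, dens y
    let u : Fin (d + 1) → ℝ := fun i => (nv i + s * t i) / (n + s)
    (∀ j, (∫ y in S, π y j * dens y) / Z = u j) ∧
    (∫ y in S, (-∑ i, π y i * Real.log (π y i)) * dens y) / Z
      = ∑ i, u i * (digamma (n + s + 1) - digamma ((n + s) * u i + 1)) := by
  intro α π S dens Z u
  have hsum : ∑ i, α i = n + s := by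
    simp only [α, Finset.sum_add_distrib, ← Finset.mul_sum, ht.2, hn, mul_one]
  have hns : n + s ≠ 0 := hsum ▸ (Finset.sum_pos (fun i _ => hpos i) Finset.univ_nonempty).ne'
  have hu : ∀ i, u i = α i / ∑ k, α k := fun i => by rw [hsum]
  refine ⟨fun j => (Dirichlet.mean_eq hpos j).trans (hu j).symm,
    (Dirichlet.expectedEntropy_eq hpos).trans (Finset.sum_congr rfl fun i _ => ?_)⟩
  rw [hu i, hsum, mul_div_cancel₀ _ hns]

/-- For a Dirichlet-distributed random probability vector `π` on the `d`-simplex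
with parameters `α i = n_i + s t_i` (total `n + s`, where `n = Σ n_i` and `t` is in
the simplex), parametrized by its first `d` coordinates `y` on
`S = {y | y i > 0, Σ y < 1}` with density proportional to `Π_i π_i^{α_i − 1}`:
the expected value of `π j` is `u j = (n_j + s t_j)/(n + s)`, and the expected
entropy `E[−Σ π_i log π_i]` equals `Σ_i h(u_i)` with
`h(u) = u [ψ(n+s+1) − ψ((n+s)u+1)]`. -/
theorem dirichlet_mean_and_expected_entropy {d : ℕ}
    (nv : Fin (d + 1) → ℝ) (s : ℝ) (t : Fin (d + 1) → ℝ)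
    (hs : 0 < s) (hnv : ∀ i, 0 ≤ nv i) (ht : t ∈ stdSimplex ℝ (Fin (d + 1)))
    (hpos : ∀ i, 0 < nv i + s * t i) (n : ℝ) (hn : n = ∑ i, nv i) :
    let α : Fin (d + 1) → ℝ := fun i => nv i + s * t i
    let π : (Fin d → ℝ) → Fin (d + 1) → ℝ :=
      fun y => Fin.snoc y (1 - ∑ i, y i)
    let S : Set (Fin d → ℝ) := {y | (∀ i, 0 < y i) ∧ ∑ i, y i < 1}
    let dens : (Fin d → ℝ) → ℝ := fun y => ∏ i, (π y i) ^ (α i - 1)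
    let Z : ℝ := ∫ y in S, dens y
    let u : Fin (d + 1) → ℝ := fun i => (nv i + s * t i) / (n + s)
    (∀ j, (∫ y in S, π y j * dens y) / Z = u j) ∧
    (∫ y in S, (-∑ i, π y i * Real.log (π y i)) * dens y) / Z
      = ∑ i, u i * (digamma (n + s + 1) - digamma ((n + s) * u i + 1)) :=
  dirichlet_mean_and_expected_entropy_general nv s t ht hpos n hn
end
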